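/- arXiv:1012.0751 — 3 statements merged into one kernel-verified Lean document; each statement's English description precedes it below -/
import Mathlib

section
/- For the rotational surface of hyperbolic type with ε = sign of ⟨z_uu − (tangential part), ·⟩ as given, the Minkowski inner products satisfy ⟨n₁, n₁⟩ = ε, ⟨n₂, n₂⟩ = −ε, and ⟨n₁, n₂⟩ = 0, where n₁ = (1/κ)(x₁'', x₂'', r''·sinh v, r''·cosh v) and n₂ = (1/κ)(x₂'r'' − x₂''r', r'x₁'' − x₁'r'', (x₂'x₁'' − x₁'x₂'')·sinh v, (x₂'x₁'' − x₁'x₂'')·cosh v). -/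
/-!
Both normals are images of vectors of the Lorentz–Minkowski space `ℝ³₁` under the map
`(a, b, c) ↦ (a, b, c sinh v, c cosh v)`, which is an isometry onto its image because
`cosh² v - sinh² v = 1`. Upstairs `n₁` comes from the acceleration `γ''` of the profile curve
`γ = (x₁, x₂, r)` and `n₂` from the Lorentzian cross product `γ' × γ''`. Differentiating the
unit-speed condition gives `⟨γ', γ''⟩ = 0`, so the Lagrange identity yields
`⟨γ' × γ'', γ' × γ''⟩ = -⟨γ', γ'⟩⟨γ'', γ''⟩ = -Q`, while `⟨γ'', γ' × γ''⟩ = 0`.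
Dividing by `κ² = εQ` gives the three values.
-/

noncomputable section
open Real

/-- Minkowski inner product of signature (3,1) on ℝ⁴. -/
def mink (a b : ℝ × ℝ × ℝ × ℝ) : ℝ :=
  a.1 * b.1 + a.2.1 * b.2.1 + a.2.2.1 * b.2.2.1 - a.2.2.2 * b.2.2.2

def lorentz (p q : ℝ × ℝ × ℝ) : ℝ :=
  p.1 * q.1 + p.2.1 * q.2.1 - p.2.2 * q.2.2

-- The timelike component has the opposite sign to the Euclidean one, so that
-- `lorentz (lorentzCross p q) w = det (p, q, w)`.
def lorentzCross (p q : ℝ × ℝ × ℝ) : ℝ × ℝ × ℝ :=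
  (p.2.1 * q.2.2 - p.2.2 * q.2.1, p.2.2 * q.1 - p.1 * q.2.2, p.2.1 * q.1 - p.1 * q.2.1)

def hypLift (v : ℝ) (p : ℝ × ℝ × ℝ) : ℝ × ℝ × ℝ × ℝ :=
  (p.1, p.2.1, p.2.2 * sinh v, p.2.2 * cosh v)

theorem mink_smul_smul (c d : ℝ) (a b : ℝ × ℝ × ℝ × ℝ) :
    mink (c • a) (d • b) = c * d * mink a b := by
  simp only [mink, Prod.smul_fst, Prod.smul_snd, smul_eq_mul]
  ring

theorem mink_hypLift (v : ℝ) (p q : ℝ × ℝ × ℝ) :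
    mink (hypLift v p) (hypLift v q) = lorentz p q := by
  simp only [mink, hypLift, lorentz]
  linear_combination (-(p.2.2 * q.2.2)) * cosh_sq_sub_sinh_sq v

theorem lorentz_lorentzCross_self (p q : ℝ × ℝ × ℝ) :
    lorentz (lorentzCross p q) (lorentzCross p q) =
      lorentz p q ^ 2 - lorentz p p * lorentz q q := by
  simp only [lorentz, lorentzCross]
  ring

theorem lorentz_lorentzCross_right (p q : ℝ × ℝ × ℝ) : lorentz q (lorentzCross p q) = 0 := by
  simp only [lorentz, lorentzCross]
  ring

theorem lorentz_deriv_eq_zero_of_lorentz_self_const {c : ℝ → ℝ × ℝ × ℝ} {c' : ℝ × ℝ × ℝ}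
    {u C : ℝ} (hc : HasDerivAt c c' u) (hconst : ∀ t, lorentz (c t) (c t) = C) :
    lorentz (c u) c' = 0 := by
  have hderiv : HasDerivAt (fun t => lorentz (c t) (c t)) (2 * lorentz (c u) c') u := by
    have h₁ : HasDerivAt (fun t => (c t).1) c'.1 u :=
      hasFDerivAt_fst.comp_hasDerivAt (f := c) u hc
    have h₂₃ : HasDerivAt (fun t => (c t).2) c'.2 u :=
      hasFDerivAt_snd.comp_hasDerivAt (f := c) u hc
    have h₂ : HasDerivAt (fun t => (c t).2.1) c'.2.1 u :=
      hasFDerivAt_fst.comp_hasDerivAt (f := fun t => (c t).2) u h₂₃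
    have h₃ : HasDerivAt (fun t => (c t).2.2) c'.2.2 u :=
      hasFDerivAt_snd.comp_hasDerivAt (f := fun t => (c t).2) u h₂₃
    exact (((h₁.mul h₁).add (h₂.mul h₂)).sub (h₃.mul h₃)).congr_deriv
      (by simp only [lorentz]; ring)
  have hzero : HasDerivAt (fun t => lorentz (c t) (c t)) 0 u := by
    simpa only [hconst] using hasDerivAt_const u C
  linarith [hderiv.unique hzero]

theorem ite_one_neg_one_mul_pos {q : ℝ} (hq : q ≠ 0) : 0 < (if 0 < q then 1 else -1) * q := by
  split_ifs with h
  · linarith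
  · linarith [lt_of_le_of_ne (not_lt.mp h) hq]

theorem ite_one_neg_one_mul_self (P : Prop) [Decidable P] :
    (if P then (1 : ℝ) else -1) * (if P then 1 else -1) = 1 := by
  split_ifs <;> norm_num

theorem inv_sqrt_mul_inv_sqrt_mul {ε Q : ℝ} (hε : ε * ε = 1) (hεQ : 0 < ε * Q) :
    (√(ε * Q))⁻¹ * (√(ε * Q))⁻¹ * Q = ε := by
  rw [← mul_inv, mul_self_sqrt hεQ.le, mul_inv, mul_assoc,
    inv_mul_cancel₀ (right_ne_zero_of_mul hεQ.ne'), mul_one, inv_eq_of_mul_eq_one_right hε]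

theorem stmt4_general (dx₁ dx₂ dr d2x₁ d2x₂ d2r Q κ : ℝ → ℝ) (ε : ℝ)
    (hdx₁ : ∀ u, HasDerivAt dx₁ (d2x₁ u) u)
    (hdx₂ : ∀ u, HasDerivAt dx₂ (d2x₂ u) u)
    (hdr : ∀ u, HasDerivAt dr (d2r u) u)
    (harc : ∀ u, (dx₁ u)^2 + (dx₂ u)^2 - (dr u)^2 = 1)
    (hQ : ∀ u, Q u = (d2x₁ u)^2 + (d2x₂ u)^2 - (d2r u)^2)
    (hQne : ∀ u, Q u ≠ 0)
    (hε : ∀ u, ε = if 0 < Q u then 1 else -1)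
    (hκ : ∀ u, κ u = Real.sqrt (ε * Q u))
    (u v : ℝ)
    (n₁ n₂ : ℝ × ℝ × ℝ × ℝ)
    (hn₁ : n₁ = (κ u)⁻¹ • ((d2x₁ u, d2x₂ u, d2r u * Real.sinh v, d2r u * Real.cosh v) : ℝ × ℝ × ℝ × ℝ))
    (hn₂ : n₂ = (κ u)⁻¹ • ((dx₂ u * d2r u - d2x₂ u * dr u,
                  dr u * d2x₁ u - dx₁ u * d2r u,
                  (dx₂ u * d2x₁ u - dx₁ u * d2x₂ u) * Real.sinh v,
                  (dx₂ u * d2x₁ u - dx₁ u * d2x₂ u) * Real.cosh v) : ℝ × ℝ × ℝ × ℝ)) :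
    mink n₁ n₁ = ε ∧ mink n₂ n₂ = -ε ∧ mink n₁ n₂ = 0 := by
  set γ' : ℝ → ℝ × ℝ × ℝ := fun t => (dx₁ t, dx₂ t, dr t)
  set γ'' : ℝ × ℝ × ℝ := (d2x₁ u, d2x₂ u, d2r u)
  have hunit : ∀ t, lorentz (γ' t) (γ' t) = 1 := fun t => by
    simpa only [lorentz, ← sq] using harc t
  have hQu : lorentz γ'' γ'' = Q u := by simp only [lorentz, γ'', hQ, sq]
  have horth : lorentz (γ' u) γ'' = 0 :=
    lorentz_deriv_eq_zero_of_lorentz_self_const ((hdx₁ u).prodMk ((hdx₂ u).prodMk (hdr u))) hunit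
  have hεε : ε * ε = 1 := by rw [hε u]; exact ite_one_neg_one_mul_self _
  have hεQ : 0 < ε * Q u := by rw [hε u]; exact ite_one_neg_one_mul_pos (hQne u)
  have hnorm := inv_sqrt_mul_inv_sqrt_mul hεε hεQ
  rw [← hκ u] at hnorm
  have hn₁' : n₁ = (κ u)⁻¹ • hypLift v γ'' := hn₁
  have hn₂' : n₂ = (κ u)⁻¹ • hypLift v (lorentzCross (γ' u) γ'') := by
    rw [hn₂, hypLift, lorentzCross]
    congr 2
    ring
  simp only [hn₁', hn₂', mink_smul_smul, mink_hypLift, lorentz_lorentzCross_self,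
    lorentz_lorentzCross_right, hunit, horth, hQu]
  refine ⟨hnorm, ?_, by ring⟩
  linear_combination -hnorm

/-- The normal frame {n₁, n₂} of the hyperbolic rotational surface satisfies
⟨n₁,n₁⟩ = ε, ⟨n₂,n₂⟩ = −ε, ⟨n₁,n₂⟩ = 0. -/
theorem stmt4 (x₁ x₂ r dx₁ dx₂ dr d2x₁ d2x₂ d2r Q κ : ℝ → ℝ) (ε : ℝ)
    (hx₁ : ∀ u, HasDerivAt x₁ (dx₁ u) u)
    (hx₂ : ∀ u, HasDerivAt x₂ (dx₂ u) u)
    (hr : ∀ u, HasDerivAt r (dr u) u)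
    (hdx₁ : ∀ u, HasDerivAt dx₁ (d2x₁ u) u)
    (hdx₂ : ∀ u, HasDerivAt dx₂ (d2x₂ u) u)
    (hdr : ∀ u, HasDerivAt dr (d2r u) u)
    (harc : ∀ u, (dx₁ u)^2 + (dx₂ u)^2 - (dr u)^2 = 1)
    (hQ : ∀ u, Q u = (d2x₁ u)^2 + (d2x₂ u)^2 - (d2r u)^2)
    (hQne : ∀ u, Q u ≠ 0)
    (hε : ∀ u, ε = if 0 < Q u then 1 else -1)
    (hκ : ∀ u, κ u = Real.sqrt (ε * Q u))
    (u v : ℝ)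
    (n₁ n₂ : ℝ × ℝ × ℝ × ℝ)
    (hn₁ : n₁ = (κ u)⁻¹ • ((d2x₁ u, d2x₂ u, d2r u * Real.sinh v, d2r u * Real.cosh v) : ℝ × ℝ × ℝ × ℝ))
    (hn₂ : n₂ = (κ u)⁻¹ • ((dx₂ u * d2r u - d2x₂ u * dr u,
                  dr u * d2x₁ u - dx₁ u * d2r u,
                  (dx₂ u * d2x₁ u - dx₁ u * d2x₂ u) * Real.sinh v,
                  (dx₂ u * d2x₁ u - dx₁ u * d2x₂ u) * Real.cosh v) : ℝ × ℝ × ℝ × ℝ)) :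
    mink n₁ n₁ = ε ∧ mink n₂ n₂ = -ε ∧ mink n₁ n₂ = 0 :=
  stmt4_general dx₁ dx₂ dr d2x₁ d2x₂ d2r Q κ ε hdx₁ hdx₂ hdr harc hQ hQne hε hκ u v n₁ n₂ hn₁ hn₂
end
end

section
/- For the rotational surface of hyperbolic type, the second fundamental tensor coefficients satisfy ⟨z_uu, n₁⟩ = εκ, ⟨z_uu, n₂⟩ = 0, ⟨z_uv, n₁⟩ = 0, ⟨z_uv, n₂⟩ = 0, ⟨z_vv, n₁⟩ = −r·r''/κ, and ⟨z_vv, n₂⟩ = (r/κ)(x₁'x₂'' − x₂'x₁''). -/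
noncomputable section
open Real

/-- The coefficients of the second fundamental tensor of the hyperbolic
rotational surface:  ⟨z_uu, n₁⟩ = εκ, ⟨z_uu, n₂⟩ = 0, ⟨z_uv, n₁⟩ = 0,
⟨z_uv, n₂⟩ = 0, ⟨z_vv, n₁⟩ = −r r''/κ, ⟨z_vv, n₂⟩ = (r/κ)(x₁'x₂'' − x₂'x₁''). -/
theorem stmt5 (x₁ x₂ r dx₁ dx₂ dr d2x₁ d2x₂ d2r Q κ : ℝ → ℝ) (ε : ℝ)
    (hx₁ : ∀ u, HasDerivAt x₁ (dx₁ u) u)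
    (hx₂ : ∀ u, HasDerivAt x₂ (dx₂ u) u)
    (hr : ∀ u, HasDerivAt r (dr u) u)
    (hdx₁ : ∀ u, HasDerivAt dx₁ (d2x₁ u) u)
    (hdx₂ : ∀ u, HasDerivAt dx₂ (d2x₂ u) u)
    (hdr : ∀ u, HasDerivAt dr (d2r u) u)
    (hrpos : ∀ u, 0 < r u)
    (harc : ∀ u, (dx₁ u)^2 + (dx₂ u)^2 - (dr u)^2 = 1)
    (hQ : ∀ u, Q u = (d2x₁ u)^2 + (d2x₂ u)^2 - (d2r u)^2)
    (hQne : ∀ u, Q u ≠ 0)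
    (hε : ∀ u, ε = if 0 < Q u then 1 else -1)
    (hκ : ∀ u, κ u = Real.sqrt (ε * Q u))
    (u v : ℝ)
    (zuu zuv zvv n₁ n₂ : ℝ × ℝ × ℝ × ℝ)
    (hzuu : zuu = (d2x₁ u, d2x₂ u, d2r u * Real.sinh v, d2r u * Real.cosh v))
    (hzuv : zuv = (0, 0, dr u * Real.cosh v, dr u * Real.sinh v))
    (hzvv : zvv = (0, 0, r u * Real.sinh v, r u * Real.cosh v))
    (hn₁ : n₁ = (κ u)⁻¹ • zuu)
    (hn₂ : n₂ = (κ u)⁻¹ • ((dx₂ u * d2r u - d2x₂ u * dr u,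
                  dr u * d2x₁ u - dx₁ u * d2r u,
                  (dx₂ u * d2x₁ u - dx₁ u * d2x₂ u) * Real.sinh v,
                  (dx₂ u * d2x₁ u - dx₁ u * d2x₂ u) * Real.cosh v) : ℝ × ℝ × ℝ × ℝ)) :
    mink zuu n₁ = ε * κ u ∧ mink zuu n₂ = 0 ∧
    mink zuv n₁ = 0 ∧ mink zuv n₂ = 0 ∧
    mink zvv n₁ = -(r u * d2r u) / κ u ∧
    mink zvv n₂ = (r u / κ u) * (dx₁ u * d2x₂ u - dx₂ u * d2x₁ u) := by
  have hεQ : 0 < ε * Q u := by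
    rcases (hQne u).lt_or_gt with h | h
    · rw [hε u, if_neg (not_lt.mpr h.le)]; nlinarith
    · rw [hε u, if_pos h]; nlinarith
  have hκpos : 0 < κ u := by rw [hκ u]; exact Real.sqrt_pos.mpr hεQ
  have hκsq : κ u ^ 2 = ε * Q u := by rw [hκ u]; exact Real.sq_sqrt hεQ.le
  have hε2 : ε ^ 2 = 1 := by
    rw [hε u]; split <;> norm_num
  have hc : Real.cosh v ^ 2 = Real.sinh v ^ 2 + 1 := Real.cosh_sq v
  subst hzuu hzuv hzvv hn₁ hn₂
  simp only [mink, Prod.smul_fst, Prod.smul_snd, smul_eq_mul]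
  refine ⟨?_, ?_, ?_, ?_, ?_, ?_⟩ <;> field_simp
  · linear_combination -ε * hκsq - hQ u - (d2r u)^2 * hc - Q u * hε2
  · linear_combination (-(d2r u) * (dx₂ u * d2x₁ u - dx₁ u * d2x₂ u)) * hc
  · ring
  · ring
  · linear_combination (-(r u * d2r u)) * hc
  · linear_combination (-(r u * (dx₂ u * d2x₁ u - dx₁ u * d2x₂ u))) * hc
end
end

section
/- The rotational surface of hyperbolic type with κ₁ ≠ 0 is a non-trivial Chen surface (i.e. its Chen invariant λ vanishes) if and only if r²κ⁴ − (r'')² + κ₁² = 0, where the Chen condition is ⟨σ(x,y), H⟩ = 0 with σ(x,y) = ((rκ² + εr'')/(2rκ))n₁ + (εκ₁/(2rκ))n₂ and H = ((rκ² − εr'')/(2rκ))n₁ − (εκ₁/(2rκ))n₂. -/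
noncomputable section

lemma mink_smul_add_smul_smul_sub_smul (u v w x : ℝ) (a b : ℝ × ℝ × ℝ × ℝ) :
    mink (u • a + v • b) (w • a - x • b)
      = u * w * mink a a + (v * w - u * x) * mink a b - v * x * mink b b := by
  obtain ⟨a₁, a₂, a₃, a₄⟩ := a
  obtain ⟨b₁, b₂, b₃, b₄⟩ := b
  simp only [mink, Prod.smul_mk, Prod.mk_add_mk, Prod.mk_sub_mk, smul_eq_mul]
  ring

lemma mink_of_normal_frame {ε : ℝ} {n₁ n₂ : ℝ × ℝ × ℝ × ℝ}
    (hn₁ : mink n₁ n₁ = ε) (hn₂ : mink n₂ n₂ = -ε) (hn₁₂ : mink n₁ n₂ = 0)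
    (u v w x : ℝ) :
    mink (u • n₁ + v • n₂) (w • n₁ - x • n₂) = ε * (u * w + v * x) := by
  rw [mink_smul_add_smul_smul_sub_smul, hn₁, hn₂, hn₁₂]
  ring

lemma chen_coefficient_eq {r κ r'' κ₁ ε : ℝ} (hr : r ≠ 0) (hκ : κ ≠ 0) (hε : ε ^ 2 = 1) :
    (r * κ^2 + ε * r'') / (2 * r * κ) * ((r * κ^2 - ε * r'') / (2 * r * κ))
        + ε * κ₁ / (2 * r * κ) * (ε * κ₁ / (2 * r * κ))
      = (r^2 * κ^4 - r''^2 + κ₁^2) / (2 * r * κ) ^ 2 := by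
  field_simp
  linear_combination (κ₁ ^ 2 - r'' ^ 2) * hε

theorem stmt12_general (r κ r'' κ₁ ε : ℝ)
    (hrpos : 0 < r) (hκpos : 0 < κ) (hε : ε = 1 ∨ ε = -1)
    (n₁ n₂ : ℝ × ℝ × ℝ × ℝ)
    (hn₁ : mink n₁ n₁ = ε) (hn₂ : mink n₂ n₂ = -ε) (hn₁₂ : mink n₁ n₂ = 0)
    (σxy H : ℝ × ℝ × ℝ × ℝ)
    (hσxy : σxy = ((r * κ^2 + ε * r'') / (2 * r * κ)) • n₁
               + ((ε * κ₁) / (2 * r * κ)) • n₂)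
    (hH : H = ((r * κ^2 - ε * r'') / (2 * r * κ)) • n₁
            - ((ε * κ₁) / (2 * r * κ)) • n₂) :
    mink σxy H = 0 ↔ r^2 * κ^4 - r''^2 + κ₁^2 = 0 := by
  have hε_sq : ε ^ 2 = 1 := by rcases hε with rfl | rfl <;> norm_num
  have hε_ne : ε ≠ 0 := by rintro rfl; norm_num at hε_sq
  have hden : (2 * r * κ) ^ 2 ≠ 0 := by positivity
  rw [hσxy, hH, mink_of_normal_frame hn₁ hn₂ hn₁₂,
    chen_coefficient_eq hrpos.ne' hκpos.ne' hε_sq, mul_eq_zero, div_eq_zero_iff]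
  simp only [hε_ne, hden, false_or, or_false]

/-- The hyperbolic rotational surface with κ₁ ≠ 0 is a non-trivial Chen
surface, i.e. ⟨σ(x,y), H⟩ = 0, if and only if r²κ⁴ − (r'')² + κ₁² = 0. -/
theorem stmt12 (r κ r'' κ₁ ε : ℝ)
    (hrpos : 0 < r) (hκpos : 0 < κ) (hε : ε = 1 ∨ ε = -1)
    (hκ₁ : κ₁ ≠ 0)
    (n₁ n₂ : ℝ × ℝ × ℝ × ℝ)
    (hn₁ : mink n₁ n₁ = ε) (hn₂ : mink n₂ n₂ = -ε) (hn₁₂ : mink n₁ n₂ = 0)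
    (σxy H : ℝ × ℝ × ℝ × ℝ)
    (hσxy : σxy = ((r * κ^2 + ε * r'') / (2 * r * κ)) • n₁
               + ((ε * κ₁) / (2 * r * κ)) • n₂)
    (hH : H = ((r * κ^2 - ε * r'') / (2 * r * κ)) • n₁
            - ((ε * κ₁) / (2 * r * κ)) • n₂) :
    mink σxy H = 0 ↔ r^2 * κ^4 - r''^2 + κ₁^2 = 0 :=
  stmt12_general r κ r'' κ₁ ε hrpos hκpos hε n₁ n₂ hn₁ hn₂ hn₁₂ σxy H hσxy hH
end
end
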